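/- arXiv:2310.02478 — 3 statements merged into one kernel-verified Lean document; each statement's English description precedes it below -/
import Mathlib

section
/- For the one-dimensional Laguerre operator with parameter p ≥ 3/2, for every smooth function f : (0,∞) → ℝ and every x > 0, the quantity Γ₂(f)(x) = x²(f''(x))² + x f'(x) f''(x) + (1/2)(p + x)(f'(x))² satisfies Γ₂(f)(x) ≥ (1/2) Γ(f)(x), where Γ(f)(x) = x (f'(x))². -/
/-- For the one-dimensional Laguerre operator with parameter `p ≥ 3/2`,
`Γ₂(f)(x) ≥ (1/2) Γ(f)(x)` pointwise on `(0,∞)` for smooth `f`. -/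
theorem stmt_2 (p : ℝ) (hp : 3 / 2 ≤ p) (f : ℝ → ℝ) (hf : ContDiff ℝ (⊤ : ℕ∞) f)
    (x : ℝ) (hx : 0 < x) :
    x ^ 2 * (deriv (deriv f) x) ^ 2 + x * deriv f x * deriv (deriv f) x
      + (1 / 2) * (p + x) * (deriv f x) ^ 2
    ≥ (1 / 2) * (x * (deriv f x) ^ 2) := by
  nlinarith [sq_nonneg (x * deriv (deriv f) x + deriv f x / 2), sq_nonneg (deriv f x), hx.le]
end

section
/- For the one-dimensional Laguerre operator with parameter p ≥ 3/2, for every smooth function f : (0,∞) → ℝ and every x > 0, the quantity Γ₃(f)(x) = x³(f''')² + 3x² f'' f''' + (3/2)(p+x)x(f'')² + (3/2)x(f'')² + (3/2)x f' f'' + (1/4)(3p + x)(f')² satisfies Γ₃(f)(x) ≥ (1/2) Γ₂(f)(x), where Γ₂(f)(x) = x²(f'')² + x f' f'' + (1/2)(p + x)(f')². -/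
/-- For the one-dimensional Laguerre operator with parameter `p ≥ 3/2`,
`Γ₃(f)(x) ≥ (1/2) Γ₂(f)(x)` pointwise on `(0,∞)` for smooth `f`. -/
theorem stmt_3 (p : ℝ) (hp : 3 / 2 ≤ p) (f : ℝ → ℝ) (hf : ContDiff ℝ (⊤ : ℕ∞) f)
    (x : ℝ) (hx : 0 < x) :
    x ^ 3 * (deriv (deriv (deriv f)) x) ^ 2
      + 3 * x ^ 2 * deriv (deriv f) x * deriv (deriv (deriv f)) x
      + (3 / 2) * (p + x) * x * (deriv (deriv f) x) ^ 2
      + (3 / 2) * x * (deriv (deriv f) x) ^ 2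
      + (3 / 2) * x * deriv f x * deriv (deriv f) x
      + (1 / 4) * (3 * p + x) * (deriv f x) ^ 2
    ≥ (1 / 2) * (x ^ 2 * (deriv (deriv f) x) ^ 2 + x * deriv f x * deriv (deriv f) x
      + (1 / 2) * (p + x) * (deriv f x) ^ 2) := by
  set a := deriv f x
  set b := deriv (deriv f) x
  set c := deriv (deriv (deriv f)) x
  nlinarith [mul_nonneg hx.le (sq_nonneg (x * c + 3 / 2 * b)),
    sq_nonneg (x * b + a / 2), sq_nonneg a, sq_nonneg b,
    mul_nonneg hx.le (sq_nonneg b), mul_nonneg hx.le (sq_nonneg a)]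
end

section
/- For the multivariate Laguerre operator on (0,∞)^d with parameters p_i ≥ 3/2, the operators Γ(f) = Σ_i x_i (∂_i f)² and Γ₂(f) = Σ_{i,j} x_i x_j (∂²_{ij} f)² + Σ_i x_i ∂_i f ∂²_{ii} f + (1/2) Σ_i (p_i + x_i)(∂_i f)² satisfy the pointwise inequality Γ₂(f)(x) ≥ (1/2) Γ(f)(x) for every smooth f and every x ∈ (0,∞)^d. -/
open scoped BigOperators

/-- First partial derivative of `f` in direction `i`. -/
noncomputable def pd {d : ℕ} (f : (Fin d → ℝ) → ℝ) (i : Fin d) (x : Fin d → ℝ) : ℝ :=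
  fderiv ℝ f x (Pi.single i 1)

/-- Second partial derivative of `f` in directions `i, j`. -/
noncomputable def pd2 {d : ℕ} (f : (Fin d → ℝ) → ℝ) (i j : Fin d) (x : Fin d → ℝ) : ℝ :=
  fderiv ℝ (fun y => fderiv ℝ f y (Pi.single j 1)) x (Pi.single i 1)

/-- For the multivariate Laguerre operator on `(0,∞)^d` with parameters `p i ≥ 3/2`,
`Γ₂(f)(x) ≥ (1/2) Γ(f)(x)` pointwise for smooth `f`. -/
theorem stmt_4 (d : ℕ) (p : Fin d → ℝ) (hp : ∀ i, 3 / 2 ≤ p i)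
    (f : (Fin d → ℝ) → ℝ) (hf : ContDiff ℝ (⊤ : ℕ∞) f)
    (x : Fin d → ℝ) (hx : ∀ i, 0 < x i) :
    (∑ i, ∑ j, x i * x j * (pd2 f i j x) ^ 2)
      + (∑ i, x i * pd f i x * pd2 f i i x)
      + (1 / 2) * ∑ i, (p i + x i) * (pd f i x) ^ 2
    ≥ (1 / 2) * ∑ i, x i * (pd f i x) ^ 2 := by
  have hdiag : ∑ i, x i * x i * (pd2 f i i x) ^ 2
      ≤ ∑ i, ∑ j, x i * x j * (pd2 f i j x) ^ 2 := by
    apply Finset.sum_le_sum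
    intro i _
    exact Finset.single_le_sum (f := fun j => x i * x j * pd2 f i j x ^ 2) (fun j _ => mul_nonneg (mul_nonneg (hx i).le (hx j).le) (sq_nonneg _)) (Finset.mem_univ i)
  have key : ∑ i, (x i * (pd f i x) ^ 2 / 2)
      ≤ ∑ i, (x i * x i * (pd2 f i i x) ^ 2 + x i * pd f i x * pd2 f i i x
          + (p i + x i) * (pd f i x) ^ 2 / 2) := by
    apply Finset.sum_le_sum
    intro i _
    have hpi := hp i
    have hxi := (hx i).le
    nlinarith [sq_nonneg (x i * pd2 f i i x + pd f i x / 2), sq_nonneg (pd f i x),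
      mul_nonneg hxi (sq_nonneg (pd f i x))]
  simp only [Finset.sum_add_distrib, ← Finset.sum_div] at key
  rw [ge_iff_le, mul_comm (1/2 : ℝ), mul_one_div, mul_comm (1/2 : ℝ), mul_one_div]
  linarith
end
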